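/- Let α ∈ ℕ₀^N with k = ℓ(α) ≥ 2 and let θ_k = (1,2)(2,3)⋯(k−1,k) so that θ_k α = (α_k, α_1, …, α_{k−1}, α_{k+1}, …). Set α̃ = θ_k(α − ε(k)) = (α_k − 1, α_1, …, α_{k−1}, 0, …). Then for the hook-length products h(·,t) one has h(α,t)/h(α̃,t) = (k − r(α,k))κ + t + α_k − 1. -/

import Mathlib

/-- The rank function: `r(α,i) = #{j : α_j > α_i} + #{j ≤ i : α_j = α_i}`,
with indices running over `{1,…,N}`. -/
def rankF (N : ℕ) (α : ℕ → ℕ) (i : ℕ) : ℕ :=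
  ((Finset.Icc 1 N).filter (fun j => α i < α j)).card +
  ((Finset.Icc 1 i).filter (fun j => α j = α i)).card

/-- The leg-length `L(α;i,j) = #{l > i : j ≤ α_l ≤ α_i} + #{l < i : j ≤ α_l + 1 ≤ α_i}`. -/
def legF (N : ℕ) (α : ℕ → ℕ) (i j : ℕ) : ℕ :=
  ((Finset.Icc 1 N).filter (fun l => i < l ∧ j ≤ α l ∧ α l ≤ α i)).card +
  ((Finset.Icc 1 N).filter (fun l => l < i ∧ j ≤ α l + 1 ∧ α l + 1 ≤ α i)).card

/-- The ring `ℚ[κ,t]`, with `κ = X 0` and `t = X 1`. -/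
abbrev RKT : Type := MvPolynomial (Fin 2) ℚ

/-- `κ` as an element of `ℚ[κ,t]`. -/
noncomputable def kap : RKT := MvPolynomial.X 0

/-- `t` as an element of `ℚ[κ,t]`. -/
noncomputable def tvar : RKT := MvPolynomial.X 1

/-- The hook-length product
`h(α,t) = ∏_{i=1}^{ℓ(α)} ∏_{j=1}^{α_i} (α_i − j + t + κ·L(α;i,j))` in `ℚ[κ,t]`
(the factors with `α_i = 0` contribute empty products, so the outer product
may be taken over `1 ≤ i ≤ N`). -/
noncomputable def hookP (N : ℕ) (α : ℕ → ℕ) : RKT :=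
  ∏ i ∈ Finset.Icc 1 N, ∏ j ∈ Finset.Icc 1 (α i),
    (((α i - j : ℕ) : RKT) + tvar + (legF N α i j : RKT) * kap)

private lemma sum_shift (N k : ℕ) (hk : 1 ≤ k) (hkN : k ≤ N) (F G : ℕ → ℕ)
    (hgt : ∀ l, k < l → l ≤ N → F l = G l) (hkk : F k = G 1)
    (hlt : ∀ l, 1 ≤ l → l < k → F l = G (l + 1)) :
    ∑ l ∈ Finset.Icc 1 N, F l = ∑ l ∈ Finset.Icc 1 N, G l := by
  refine Finset.sum_nbij' (fun l => if k < l then l else if l = k then 1 else l + 1)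
    (fun m => if k < m then m else if m = 1 then k else m - 1) ?_ ?_ ?_ ?_ ?_
  · intro a ha; simp only [Finset.mem_Icc] at *; split_ifs <;> omega
  · intro a ha; simp only [Finset.mem_Icc] at *; split_ifs <;> omega
  · intro a ha; simp only [Finset.mem_Icc] at ha; split_ifs <;> omega
  · intro a ha; simp only [Finset.mem_Icc] at ha; split_ifs <;> omega
  · intro a ha; simp only [Finset.mem_Icc] at ha
    rcases lt_trichotomy a k with h | h | h
    · rw [if_neg (by omega), if_neg (by omega)]; exact hlt a ha.1 h
    · subst h; rw [if_neg (by omega), if_pos rfl]; exact hkk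
    · rw [if_pos h]; exact hgt a h ha.2

private lemma legF_eq_sum (N : ℕ) (β : ℕ → ℕ) (i j : ℕ) :
    legF N β i j = ∑ l ∈ Finset.Icc 1 N,
      ((if i < l ∧ j ≤ β l ∧ β l ≤ β i then 1 else 0) +
       (if l < i ∧ j ≤ β l + 1 ∧ β l + 1 ≤ β i then 1 else 0)) := by
  rw [legF, Finset.sum_add_distrib, Finset.card_filter, Finset.card_filter]

section Main

variable {N k : ℕ} {α hat : ℕ → ℕ}

private lemma leg1 (hk2 : 2 ≤ k) (hkN : k ≤ N)
    (hαk : 0 < α k) (hα0 : ∀ i, k < i → α i = 0)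
    (hhat : ∀ i, hat i = if i = 1 then α k - 1 else if i ≤ k then α (i - 1) else 0)
    (i j : ℕ) (hi1 : 1 ≤ i) (hik : i < k) (hj : 1 ≤ j) :
    legF N α i j = legF N hat (i + 1) j := by
  rw [legF_eq_sum, legF_eq_sum]
  refine sum_shift N k (by omega) hkN _ _ ?_ ?_ ?_
  · intro l hl hlN
    have h0 := hα0 l
    simp only [hhat, Nat.add_sub_cancel]
    split_ifs <;> omega
  · have h0 := hα0 k
    simp only [hhat, Nat.add_sub_cancel]
    split_ifs <;> omega
  · intro l hl1 hlk
    simp only [hhat, Nat.add_sub_cancel]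
    split_ifs <;> omega

private lemma leg2 (hk2 : 2 ≤ k) (hkN : k ≤ N)
    (hαk : 0 < α k) (hα0 : ∀ i, k < i → α i = 0)
    (hhat : ∀ i, hat i = if i = 1 then α k - 1 else if i ≤ k then α (i - 1) else 0)
    (j : ℕ) (hj : 2 ≤ j) :
    legF N α k j = legF N hat 1 (j - 1) := by
  rw [legF_eq_sum, legF_eq_sum]
  refine sum_shift N k (by omega) hkN _ _ ?_ ?_ ?_
  · intro l hl hlN
    have h0 := hα0 l
    simp only [hhat, Nat.add_sub_cancel]
    split_ifs <;> omega
  · simp only [hhat]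
    split_ifs <;> omega
  · intro l hl1 hlk
    simp only [hhat, Nat.add_sub_cancel]
    split_ifs <;> omega

private lemma leg3 (hk2 : 2 ≤ k) (hkN : k ≤ N)
    (hαk : 0 < α k) (hα0 : ∀ i, k < i → α i = 0) :
    legF N α k 1 + rankF N α k = k := by
  have h2 : ((Finset.Icc 1 k).filter (fun j => α j = α k)) =
      ((Finset.Icc 1 N).filter (fun j => j ≤ k ∧ α j = α k)) := by
    ext x
    simp only [Finset.mem_filter, Finset.mem_Icc]
    omega
  rw [legF_eq_sum, rankF, h2, Finset.card_filter, Finset.card_filter,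
    ← Finset.sum_add_distrib, ← Finset.sum_add_distrib]
  have hstep : ∀ l ∈ Finset.Icc 1 N,
      (((if k < l ∧ 1 ≤ α l ∧ α l ≤ α k then 1 else 0) +
       (if l < k ∧ 1 ≤ α l + 1 ∧ α l + 1 ≤ α k then 1 else 0)) +
       ((if α k < α l then 1 else 0) + (if l ≤ k ∧ α l = α k then 1 else 0))) =
      (if l ≤ k then 1 else 0) := by
    intro l hl
    simp only [Finset.mem_Icc] at hl
    have h0 := hα0 l
    rcases lt_trichotomy l k with h | rfl | h <;> split_ifs <;> omega
  rw [Finset.sum_congr rfl hstep]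
  have : ∑ l ∈ Finset.Icc 1 N, (if l ≤ k then 1 else 0) =
      ((Finset.Icc 1 N).filter (fun l => l ≤ k)).card := (Finset.card_filter _ _).symm
  rw [this]
  have : ((Finset.Icc 1 N).filter (fun l => l ≤ k)) = Finset.Icc 1 k := by
    ext x
    simp only [Finset.mem_filter, Finset.mem_Icc]
    omega
  rw [this, Nat.card_Icc]
  omega

end Main

/-- for `α` with `ℓ(α) = k ≥ 2` and
`α̃ = (α_k − 1, α_1, …, α_{k−1}, 0, …)`, one has
`h(α,t)/h(α̃,t) = (k − r(α,k))κ + t + α_k − 1`, stated in cross-multiplied form. -/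
theorem hook_ratio_cyclic_shift
    (N k : ℕ) (α hat : ℕ → ℕ)
    (hk2 : 2 ≤ k) (hkN : k ≤ N)
    (hαk : 0 < α k) (hα0 : ∀ i, k < i → α i = 0)
    (hhat : ∀ i, hat i = if i = 1 then α k - 1 else if i ≤ k then α (i - 1) else 0) :
    hookP N α =
      hookP N hat *
        ((((k : ℤ) - (rankF N α k : ℤ) : ℤ) : RKT) * kap + tvar + ((α k - 1 : ℕ) : RKT)) := by
  have hhat0 : ∀ i, k < i → hat i = 0 := by
    intro i hi; rw [hhat, if_neg (by omega), if_neg (by omega)]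
  have hhat1 : hat 1 = α k - 1 := by rw [hhat]; simp
  -- restrict outer products to `Icc 1 k`
  have hres : ∀ (β : ℕ → ℕ), (∀ i, k < i → β i = 0) →
      hookP N β = ∏ i ∈ Finset.Icc 1 k, ∏ j ∈ Finset.Icc 1 (β i),
        (((β i - j : ℕ) : RKT) + tvar + (legF N β i j : RKT) * kap) := by
    intro β hβ
    rw [hookP]
    refine (Finset.prod_subset (Finset.Icc_subset_Icc le_rfl hkN) ?_).symm
    intro x hx hx'
    simp only [Finset.mem_Icc] at hx hx'
    rw [hβ x (by omega)]
    simp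
  rw [hres α hα0, hres hat hhat0]
  -- split off row `k` on the `α` side
  obtain ⟨m, rfl⟩ : ∃ m, k = m + 1 := ⟨k - 1, by omega⟩
  rw [Finset.prod_Icc_succ_top (by omega)]
  -- split off row `1` on the `hat` side
  have hins : Finset.Icc 1 (m + 1) = insert 1 (Finset.Icc 2 (m + 1)) := by
    ext x
    simp only [Finset.mem_insert, Finset.mem_Icc]
    omega
  rw [hins, Finset.prod_insert (by simp)]
  -- rows `i < k` of `α` match rows `i+1` of `hat`
  have e1 : ∏ i ∈ Finset.Icc 1 m, ∏ j ∈ Finset.Icc 1 (α i),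
        (((α i - j : ℕ) : RKT) + tvar + (legF N α i j : RKT) * kap) =
      ∏ i ∈ Finset.Icc 2 (m + 1), ∏ j ∈ Finset.Icc 1 (hat i),
        (((hat i - j : ℕ) : RKT) + tvar + (legF N hat i j : RKT) * kap) := by
    refine Finset.prod_nbij' (fun i => i + 1) (fun i => i - 1) ?_ ?_ ?_ ?_ ?_
    · intro a ha; simp only [Finset.mem_Icc] at *; omega
    · intro a ha; simp only [Finset.mem_Icc] at *; omega
    · intro a _; omega
    · intro a ha; simp only [Finset.mem_Icc] at ha; omega
    · intro a ha
      simp only [Finset.mem_Icc] at ha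
      have hv : hat (a + 1) = α a := by
        rw [hhat, if_neg (by omega), if_pos (by omega)]
        simp
      rw [hv]
      refine Finset.prod_congr rfl (fun j hj => ?_)
      simp only [Finset.mem_Icc] at hj
      rw [leg1 hk2 hkN hαk hα0 hhat a j ha.1 (by omega) hj.1]
  -- row `k` of `α`: split off the `j = 1` factor
  have hins2 : Finset.Icc 1 (α (m + 1)) = insert 1 (Finset.Icc 2 (α (m + 1))) := by
    ext x
    simp only [Finset.mem_insert, Finset.mem_Icc]
    omega
  have e2 : ∏ j ∈ Finset.Icc 2 (α (m + 1)),
        (((α (m + 1) - j : ℕ) : RKT) + tvar + (legF N α (m + 1) j : RKT) * kap) =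
      ∏ j ∈ Finset.Icc 1 (hat 1),
        (((hat 1 - j : ℕ) : RKT) + tvar + (legF N hat 1 j : RKT) * kap) := by
    rw [hhat1]
    refine Finset.prod_nbij' (fun j => j - 1) (fun j => j + 1) ?_ ?_ ?_ ?_ ?_
    · intro a ha; simp only [Finset.mem_Icc] at *; omega
    · intro a ha; simp only [Finset.mem_Icc] at *; omega
    · intro a ha; simp only [Finset.mem_Icc] at ha; omega
    · intro a _; omega
    · intro a ha
      simp only [Finset.mem_Icc] at ha
      have hn : (α (m + 1) - a : ℕ) = (α (m + 1) - 1 - (a - 1) : ℕ) := by omega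
      rw [leg2 hk2 hkN hαk hα0 hhat a ha.1, hn]
  have e3 : ((legF N α (m + 1) 1 : ℕ) : RKT) =
      (((((m + 1 : ℕ) : ℤ) - (rankF N α (m + 1) : ℤ) : ℤ) : RKT)) := by
    have h3 := leg3 hk2 hkN hαk hα0
    have hz : ((legF N α (m + 1) 1 : ℕ) : ℤ) =
        (((m + 1 : ℕ) : ℤ) - (rankF N α (m + 1) : ℤ)) := by
      push_cast
      omega
    rw [← hz, Int.cast_natCast]
  rw [e1, hins2, Finset.prod_insert (by simp), e2, e3]
  ring
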